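/- arXiv:1701.05630 — 2 statements merged into one kernel-verified Lean document; each statement's English description precedes it below -/
import Mathlib

section
/- For every α ∈ F, N_α² = q² · I_{(q+2)q²} + q · J_{(q+2)q²} and N_α · J_{(q+2)q²} = (q²+q) · J_{(q+2)q²}; thus N_α is the symmetric incidence matrix of a symmetric 2-((q+2)q², q²+q, q) design. -/
open Matrix Kronecker

/-- The `q × q` permutation matrix `φ(α)` with `(x,y)`-entry `1` iff `y = x + α`. -/
noncomputable def phi {F : Type*} [Add F] [DecidableEq F] (α : F) : Matrix F F ℝ :=
  Matrix.of fun x y => if y = x + α then (1 : ℝ) else 0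

/-- The all-ones matrix. -/
noncomputable def Jmat (n : Type*) : Matrix n n ℝ :=
  Matrix.of fun _ _ => (1 : ℝ)

/-- The auxiliary matrix `C_{a,α'}` with `((β,x),(β',y))`-entry `1` iff
`y = x + a(β+β') + α'`. -/
noncomputable def Cmat {F : Type*} [Field F] [DecidableEq F] (a α' : F) :
    Matrix (F × F) (F × F) ℝ :=
  Matrix.of fun p p' => if p'.2 = p.2 + a * (p.1 + p'.1) + α' then (1 : ℝ) else 0

/-- Embedding of `F ∪ {y}` into `S = F ∪ {x, y}`, coded as `Option F → F ⊕ Bool`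
(`none ↦ y = Sum.inr true`; the symbol `x` is `Sum.inr false`). -/
def emb {F : Type*} : Option F → F ⊕ Bool :=
  fun o => o.elim (Sum.inr true) Sum.inl

/-- `C_{a,α}` for `a ∈ F ∪ {y}`, where `C_{y,α} = φ(α) ⊗ J_q`. -/
noncomputable def CmatE {F : Type*} [Field F] [DecidableEq F] (a : Option F) (α : F) :
    Matrix (F × F) (F × F) ℝ :=
  a.elim (phi α ⊗ₖ Jmat F) (fun b => Cmat b α)

/-- `N_α = Σ_{a ∈ F ∪ {y}} P_a ⊗ C_{a,α}`. -/
noncomputable def Nmat {F : Type*} [Field F] [Fintype F] [DecidableEq F]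
    (P : F ⊕ Bool → Matrix (F ⊕ Bool) (F ⊕ Bool) ℝ) (α : F) :
    Matrix ((F ⊕ Bool) × F × F) ((F ⊕ Bool) × F × F) ℝ :=
  ∑ a : Option F, P (emb a) ⊗ₖ CmatE a α

/-!
Write `N_α = ∑_a A_a ⊗ B_a` with `A_a = P_a` and `B_a = C_{a,α}`, `a ∈ F ∪ {y}`. The `A_a`
are symmetric permutation matrices, so `A_a² = I`, and `∑_a A_a = J - I` because `P_x = I`.
In characteristic 2 one checks `B_a B_b = J` for `a ≠ b` (the entry counts the solutions of an
affine equation with nonzero slope `a + b`), while `∑_a B_a² = qJ + q²I`. Hence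
`N_α² = (J - I)² ⊗ J + I ⊗ ∑_a (B_a² - J) = (qJ + I) ⊗ J + I ⊗ (q²I - J) = q²I + qJ`.
The row sums follow from `B_a J = qJ` and `(J - I) J = (q + 1) J`.
-/

theorem Finset.sum_eq_zero_or_one {ι : Type*} {s : Finset ι} {x : ι → ℝ}
    (hx : ∀ i ∈ s, x i = 0 ∨ x i = 1) (hle : ∑ i ∈ s, x i ≤ 1) :
    ∑ i ∈ s, x i = 0 ∨ ∑ i ∈ s, x i = 1 := by
  classical
  by_cases hone : ∃ i ∈ s, x i = 1
  · obtain ⟨i, hi, hxi⟩ := hone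
    have hrest : 0 ≤ ∑ j ∈ s.erase i, x j :=
      Finset.sum_nonneg fun j hj => by
        rcases hx j (Finset.mem_of_mem_erase hj) with h | h <;> simp [h]
    rw [← Finset.add_sum_erase s x hi, hxi] at hle ⊢
    right
    linarith
  · push Not at hone
    exact Or.inl (Finset.sum_eq_zero fun i hi => (hx i hi).resolve_right (hone i hi))

section Kronecker

variable {ι l n R : Type*} [Fintype ι]

theorem Matrix.sum_kronecker [CommSemiring R] (A : ι → Matrix l l R) (B : Matrix n n R) :
    (∑ i, A i) ⊗ₖ B = ∑ i, A i ⊗ₖ B := by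
  ext
  simp [Matrix.sum_apply, Finset.sum_mul]

theorem Matrix.kronecker_sum [CommSemiring R] (A : Matrix l l R) (B : ι → Matrix n n R) :
    A ⊗ₖ (∑ i, B i) = ∑ i, A ⊗ₖ B i := by
  ext
  simp [Matrix.sum_apply, Finset.mul_sum]

theorem Matrix.kronecker_sub [CommRing R] (A : Matrix l l R) (B₁ B₂ : Matrix n n R) :
    A ⊗ₖ (B₁ - B₂) = A ⊗ₖ B₁ - A ⊗ₖ B₂ := by
  ext
  simp [mul_sub]

theorem sum_kronecker_mul_self [DecidableEq ι] [Fintype l] [DecidableEq l] [Fintype n]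
    [DecidableEq n] [CommRing R] (A : ι → Matrix l l R) (B : ι → Matrix n n R)
    (K : Matrix n n R) (hA : ∀ i, A i * A i = 1) (hB : ∀ i j, i ≠ j → B i * B j = K) :
    (∑ i, A i ⊗ₖ B i) * (∑ i, A i ⊗ₖ B i) =
      ((∑ i, A i) * (∑ i, A i)) ⊗ₖ K + 1 ⊗ₖ ∑ i, (B i * B i - K) := by
  have hterm : ∀ i j, (A i ⊗ₖ B i) * (A j ⊗ₖ B j) =
      (A i * A j) ⊗ₖ K + if i = j then 1 ⊗ₖ (B i * B i - K) else 0 := by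
    intro i j
    rw [← mul_kronecker_mul]
    split_ifs with h
    · subst h
      rw [hA, Matrix.kronecker_sub]
      abel
    · rw [hB i j h, add_zero]
  simp_rw [Finset.sum_mul_sum, hterm, Finset.sum_add_distrib, Finset.sum_ite_eq,
    Finset.mem_univ, if_true, Matrix.sum_kronecker, Matrix.kronecker_sum]

theorem sum_kronecker_apply_eq_zero_or_one (A : ι → Matrix l l ℝ) (B : ι → Matrix n n ℝ)
    (hA : ∀ i r s, A i r s = 0 ∨ A i r s = 1) (hB : ∀ i r s, B i r s = 0 ∨ B i r s = 1)
    (hsum : ∀ r s, ∑ i, A i r s ≤ 1) (v w : l × n) :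
    (∑ i, A i ⊗ₖ B i) v w = 0 ∨ (∑ i, A i ⊗ₖ B i) v w = 1 := by
  simp only [Matrix.sum_apply, kroneckerMap_apply]
  apply Finset.sum_eq_zero_or_one
  · intro i _
    rcases hA i v.1 w.1 with ha | ha <;> rcases hB i v.2 w.2 with hb | hb <;> simp [ha, hb]
  · refine (Finset.sum_le_sum fun i _ => ?_).trans (hsum v.1 w.1)
    rcases hA i v.1 w.1 with ha | ha <;> rcases hB i v.2 w.2 with hb | hb <;> simp [ha, hb]

end Kronecker

theorem Jmat_mul_Jmat (n : Type*) [Fintype n] :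
    Jmat n * Jmat n = (Fintype.card n : ℝ) • Jmat n := by
  ext
  simp [Jmat, Matrix.mul_apply]

theorem Jmat_kronecker_Jmat (l n : Type*) : Jmat l ⊗ₖ Jmat n = Jmat (l × n) := by
  ext
  simp [Jmat]

theorem Jmat_sub_one_mul_Jmat (n : Type*) [Fintype n] [DecidableEq n] :
    (Jmat n - 1) * Jmat n = ((Fintype.card n : ℝ) - 1) • Jmat n := by
  rw [sub_mul, Jmat_mul_Jmat, one_mul, sub_smul, one_smul]

theorem Jmat_sub_one_mul_self (n : Type*) [Fintype n] [DecidableEq n] :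
    (Jmat n - 1) * (Jmat n - 1) = ((Fintype.card n : ℝ) - 2) • Jmat n + 1 := by
  rw [mul_sub, Jmat_sub_one_mul_Jmat, sub_mul, one_mul, mul_one]
  module

section Field

variable {F : Type*} [Field F] [DecidableEq F]

theorem phi_zero : phi (0 : F) = 1 := by
  ext x y
  simp [phi, Matrix.one_apply, eq_comm]

theorem phi_transpose [CharP F 2] (α : F) : (phi α)ᵀ = phi α := by
  ext x y
  simp only [transpose_apply, phi, of_apply, CharTwo.eq_add_iff_add_eq.trans eq_comm]

theorem Cmat_transpose [CharP F 2] (a α : F) : (Cmat a α)ᵀ = Cmat a α := by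
  ext ⟨β, x⟩ ⟨β', y⟩
  simp only [transpose_apply, Cmat, of_apply, add_assoc, CharTwo.eq_add_iff_add_eq.trans eq_comm,
    add_comm β' β]

theorem CmatE_transpose [CharP F 2] (a : Option F) (α : F) : (CmatE a α)ᵀ = CmatE a α := by
  cases a with
  | none =>
    change (phi α ⊗ₖ Jmat F)ᵀ = phi α ⊗ₖ Jmat F
    rw [← kroneckerMap_transpose, phi_transpose]
    rfl
  | some b => exact Cmat_transpose b α

theorem CmatE_apply_eq_zero_or_one (a : Option F) (α : F) (p p' : F × F) :
    CmatE a α p p' = 0 ∨ CmatE a α p p' = 1 := by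
  cases a <;> simp only [CmatE, Option.elim, Cmat, phi, Jmat, kroneckerMap_apply, of_apply,
    mul_one] <;> split_ifs <;> simp

variable [Fintype F]

theorem sum_ite_eq_add_mul {c : F} (hc : c ≠ 0) (d z : F) :
    (∑ t : F, if z = d + c * t then (1 : ℝ) else 0) = 1 := by
  have h : ∀ t : F, z = d + c * t ↔ t = c⁻¹ * (z - d) := fun t => by
    rw [eq_inv_mul_iff_mul_eq₀ hc, eq_sub_iff_add_eq, add_comm, eq_comm]
  simp [h]

theorem phi_mul (α α' : F) : phi α * phi α' = phi (α + α') := by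
  ext x y
  simp only [phi, Matrix.mul_apply, of_apply, ite_mul, one_mul, zero_mul, Finset.sum_ite_eq',
    Finset.mem_univ, if_true, add_assoc]

theorem phi_mul_Jmat (α : F) : phi α * Jmat F = Jmat F := by
  ext x y
  simp [phi, Jmat, Matrix.mul_apply]

theorem Cmat_mul_Jmat (b α : F) :
    Cmat b α * Jmat (F × F) = (Fintype.card F : ℝ) • Jmat (F × F) := by
  ext ⟨β, x⟩ ⟨β'', z⟩
  rw [Matrix.mul_apply, Fintype.sum_prod_type]
  simp only [Cmat, Jmat, of_apply, mul_one, Finset.sum_ite_eq', Finset.mem_univ, if_true]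
  simp

theorem CmatE_mul_Jmat (a : Option F) (α : F) :
    CmatE a α * Jmat (F × F) = (Fintype.card F : ℝ) • Jmat (F × F) := by
  cases a with
  | none =>
    change (phi α ⊗ₖ Jmat F) * Jmat (F × F) = _
    rw [← Jmat_kronecker_Jmat, ← mul_kronecker_mul, phi_mul_Jmat, Jmat_mul_Jmat,
      kronecker_smul]
  | some b => exact Cmat_mul_Jmat b α

theorem phi_kronecker_Jmat_mul_Cmat (b α : F) :
    (phi α ⊗ₖ Jmat F) * Cmat b α = Jmat (F × F) := by
  ext ⟨β, x⟩ ⟨β'', z⟩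
  rw [Matrix.mul_apply, Fintype.sum_prod_type]
  simp only [kroneckerMap_apply, phi, Jmat, Cmat, of_apply, mul_one, ite_mul, one_mul, zero_mul]
  rw [Finset.sum_comm]
  simp only [Finset.sum_ite_eq', Finset.mem_univ, if_true, add_assoc]
  simp [eq_comm (a := z), ← eq_sub_iff_add_eq]

variable [CharP F 2]

theorem Cmat_mul_self (a α : F) :
    Cmat a α * Cmat a α = (Fintype.card F : ℝ) • Cmat a 0 := by
  ext ⟨β, x⟩ ⟨β'', z⟩
  have hcancel : ∀ β' : F,
      x + a * (β + β') + α + a * (β' + β'') + α = x + a * (β + β'') + 0 :=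
    fun β' => by linear_combination (α + a * β') * CharTwo.two_eq_zero (R := F)
  simp only [Matrix.mul_apply, Fintype.sum_prod_type, Cmat, of_apply, ite_mul, one_mul, zero_mul,
    Finset.sum_ite_eq', Finset.mem_univ, if_true, hcancel]
  simp

theorem Cmat_mul_Cmat_of_ne {a b : F} (hab : a ≠ b) (α : F) :
    Cmat a α * Cmat b α = Jmat (F × F) := by
  ext ⟨β, x⟩ ⟨β'', z⟩
  have hlinear : ∀ β' : F, x + a * (β + β') + α + b * (β' + β'') + α
      = x + a * β + b * β'' + (a + b) * β' :=
    fun β' => by linear_combination α * CharTwo.two_eq_zero (R := F)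
  simp only [Matrix.mul_apply, Fintype.sum_prod_type, Cmat, of_apply, ite_mul, one_mul, zero_mul,
    Finset.sum_ite_eq', Finset.mem_univ, if_true, hlinear]
  exact sum_ite_eq_add_mul (fun h => hab (CharTwo.add_eq_zero.mp h)) _ z

theorem sum_Cmat_zero :
    ∑ b : F, Cmat b 0 =
      Jmat (F × F) + (Fintype.card F : ℝ) • 1 - (1 : Matrix F F ℝ) ⊗ₖ Jmat F := by
  ext ⟨β, x⟩ ⟨β'', z⟩
  by_cases hβ : β = β''
  · subst hβ
    simp [Cmat, Jmat, Matrix.sum_apply, Matrix.one_apply, CharTwo.add_self_eq_zero, eq_comm]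
  · have hcomm : ∀ b : F, x + b * (β + β'') + 0 = x + (β + β'') * b := fun b => by ring
    simp only [Matrix.sum_apply, Cmat, of_apply, hcomm]
    rw [sum_ite_eq_add_mul (fun h => hβ (CharTwo.add_eq_zero.mp h)) x z]
    simp [Jmat, hβ]

end Field

section CmatE

variable {F : Type*} [Field F] [Fintype F] [DecidableEq F] [CharP F 2]

theorem CmatE_mul_of_ne {a b : Option F} (hab : a ≠ b) (α : F) :
    CmatE a α * CmatE b α = Jmat (F × F) := by
  match a, b with
  | none, none => exact absurd rfl hab
  | none, some b => exact phi_kronecker_Jmat_mul_Cmat b α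
  | some a, none =>
    rw [← CmatE_transpose, ← CmatE_transpose (F := F) none, ← transpose_mul]
    exact congrArg transpose (phi_kronecker_Jmat_mul_Cmat a α)
  | some a, some b => exact Cmat_mul_Cmat_of_ne ((Option.some_injective F).ne_iff.mp hab) α

theorem sum_CmatE_mul_self_sub (α : F) :
    ∑ a : Option F, (CmatE a α * CmatE a α - Jmat (F × F)) =
      (Fintype.card F : ℝ) ^ 2 • 1 - Jmat (F × F) := by
  have hnone : CmatE none α * CmatE none α = (Fintype.card F : ℝ) • (1 ⊗ₖ Jmat F) := by
    change (phi α ⊗ₖ Jmat F) * (phi α ⊗ₖ Jmat F) = _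
    rw [← mul_kronecker_mul, phi_mul, CharTwo.add_self_eq_zero, phi_zero, Jmat_mul_Jmat,
      kronecker_smul]
  rw [Finset.sum_sub_distrib, Fintype.sum_option, hnone]
  simp only [CmatE, Option.elim, Cmat_mul_self]
  rw [← Finset.smul_sum, sum_Cmat_zero, Finset.sum_const, Finset.card_univ, Fintype.card_option]
  module

end CmatE

theorem sum_comp_emb {F M : Type*} [Fintype F] [AddCommGroup M] (f : F ⊕ Bool → M) :
    ∑ a : Option F, f (emb a) = ∑ s, f s - f (Sum.inr false) := by
  rw [Fintype.sum_option, Fintype.sum_sum_type, Fintype.sum_bool]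
  simp only [emb, Option.elim]
  abel

theorem sum_comp_emb_eq_Jmat_sub_one {F : Type*} [Fintype F] [DecidableEq F]
    {P : F ⊕ Bool → Matrix (F ⊕ Bool) (F ⊕ Bool) ℝ} (hPx : P (Sum.inr false) = 1)
    (hPsum : ∑ a : F ⊕ Bool, P a = Jmat (F ⊕ Bool)) :
    ∑ a : Option F, P (emb a) = Jmat (F ⊕ Bool) - 1 := by
  rw [sum_comp_emb, hPsum, hPx]

section Nmat

variable {F : Type*} [Field F] [Fintype F] [DecidableEq F]
  {P : F ⊕ Bool → Matrix (F ⊕ Bool) (F ⊕ Bool) ℝ}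

theorem Nmat_mul_self [CharP F 2] (hPsymm : ∀ a, (P a)ᵀ = P a)
    (hPperm : ∀ a, P a * (P a)ᵀ = 1) (hPx : P (Sum.inr false) = 1)
    (hPsum : ∑ a : F ⊕ Bool, P a = Jmat (F ⊕ Bool)) (α : F) :
    Nmat P α * Nmat P α =
      (Fintype.card F : ℝ) ^ 2 • 1 + (Fintype.card F : ℝ) • Jmat ((F ⊕ Bool) × F × F) := by
  have hinvol : ∀ a, P (emb a) * P (emb a) = 1 := fun a => by
    simpa only [hPsymm] using hPperm (emb a)
  have hcard : (Fintype.card (F ⊕ Bool) : ℝ) - 2 = Fintype.card F := by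
    simp [Fintype.card_sum]
  rw [Nmat, sum_kronecker_mul_self _ _ _ hinvol fun a b h => CmatE_mul_of_ne h α,
    sum_comp_emb_eq_Jmat_sub_one hPx hPsum, Jmat_sub_one_mul_self, sum_CmatE_mul_self_sub, hcard,
    add_kronecker, smul_kronecker, Jmat_kronecker_Jmat, Matrix.kronecker_sub, kronecker_smul,
    one_kronecker_one]
  abel

theorem Nmat_mul_Jmat (hPx : P (Sum.inr false) = 1)
    (hPsum : ∑ a : F ⊕ Bool, P a = Jmat (F ⊕ Bool)) (α : F) :
    Nmat P α * Jmat ((F ⊕ Bool) × F × F) =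
      ((Fintype.card F : ℝ) ^ 2 + Fintype.card F) • Jmat ((F ⊕ Bool) × F × F) := by
  rw [← Jmat_kronecker_Jmat, Nmat, Finset.sum_mul]
  simp_rw [← mul_kronecker_mul, CmatE_mul_Jmat, kronecker_smul, ← Finset.smul_sum,
    ← Matrix.sum_kronecker, ← Finset.sum_mul, sum_comp_emb_eq_Jmat_sub_one hPx hPsum,
    Jmat_sub_one_mul_Jmat, smul_kronecker, smul_smul, Fintype.card_sum, Fintype.card_bool]
  push_cast
  ring_nf

theorem Nmat_transpose [CharP F 2] (hPsymm : ∀ a, (P a)ᵀ = P a) (α : F) :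
    (Nmat P α)ᵀ = Nmat P α := by
  simp only [Nmat, transpose_sum, ← kroneckerMap_transpose, hPsymm, CmatE_transpose]

theorem Nmat_apply_eq_zero_or_one (hP01 : ∀ a i j, P a i j = 0 ∨ P a i j = 1)
    (hPx : P (Sum.inr false) = 1) (hPsum : ∑ a : F ⊕ Bool, P a = Jmat (F ⊕ Bool)) (α : F)
    (v w : (F ⊕ Bool) × F × F) : Nmat P α v w = 0 ∨ Nmat P α v w = 1 := by
  refine sum_kronecker_apply_eq_zero_or_one _ _ (fun a => hP01 (emb a))
    (fun a => CmatE_apply_eq_zero_or_one a α) (fun i j => ?_) v w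
  rw [← Matrix.sum_apply, sum_comp_emb_eq_Jmat_sub_one hPx hPsum]
  by_cases h : i = j <;> simp [Jmat, h]

end Nmat

/-- `N_α² = q²·I + q·J` and `N_α·J = (q²+q)·J`; thus `N_α` is the symmetric
(0,1) incidence matrix of a symmetric `2-((q+2)q², q²+q, q)` design. -/
theorem stmt7 {F : Type*} [Field F] [Fintype F] [DecidableEq F]
    (m : ℕ) (hm : 1 ≤ m) (hF : Fintype.card F = 2 ^ m)
    (P : F ⊕ Bool → Matrix (F ⊕ Bool) (F ⊕ Bool) ℝ)
    (hPsymm : ∀ a, (P a)ᵀ = P a)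
    (hP01 : ∀ a i j, P a i j = 0 ∨ P a i j = 1)
    (hPperm : ∀ a, P a * (P a)ᵀ = 1)
    (hPx : P (Sum.inr false) = 1)
    (hPsum : ∑ a : F ⊕ Bool, P a = Jmat (F ⊕ Bool)) (α : F) :
    Nmat P α * Nmat P α =
        ((2 ^ m : ℝ)) ^ 2 • (1 : Matrix ((F ⊕ Bool) × F × F) ((F ⊕ Bool) × F × F) ℝ) +
          (2 ^ m : ℝ) • Jmat ((F ⊕ Bool) × F × F) ∧
      Nmat P α * Jmat ((F ⊕ Bool) × F × F) =
        (((2 ^ m : ℝ)) ^ 2 + 2 ^ m) • Jmat ((F ⊕ Bool) × F × F) ∧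
      (Nmat P α)ᵀ = Nmat P α ∧
      (∀ v w, Nmat P α v w = 0 ∨ Nmat P α v w = 1) := by
  have : CharP F 2 :=
    ringChar.of_eq <| FiniteField.even_card_iff_char_two.mpr <| by
      rw [hF]
      exact Nat.two_pow_mod_two_eq_zero.mpr hm
  have hq : (Fintype.card F : ℝ) = 2 ^ m := by exact_mod_cast hF
  rw [← hq]
  exact ⟨Nmat_mul_self hPsymm hPperm hPx hPsum α, Nmat_mul_Jmat hPx hPsum α,
    Nmat_transpose hPsymm α, Nmat_apply_eq_zero_or_one hP01 hPx hPsum α⟩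
end

section
/- For all α, β ∈ F: A_{α,3}·A_{β,3} = q²·A_{α+β,0} + Σ_{γ∈F} ( q·(−A_{γ,0} + A_{γ,1} + A_{γ,2}) + (q−2)·A_{γ,3} ). -/
open Matrix Kronecker

/-- The matrices `A_{α,0}, A_{α,1}, A_{α,2}, A_{α,3}`:
`A_{α,0} = I_{(q+2)q} ⊗ φ(α)`, `A_{α,1} = I_{q+2} ⊗ C_{y,α}`,
`A_{α,2} = P_y ⊗ C_{y,α}`, `A_{α,3} = N_α − P_y ⊗ C_{y,α}`. -/
noncomputable def Amat {F : Type*} [Field F] [Fintype F] [DecidableEq F]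
    (P : F ⊕ Bool → Matrix (F ⊕ Bool) (F ⊕ Bool) ℝ) (α : F) :
    Fin 4 → Matrix ((F ⊕ Bool) × F × F) ((F ⊕ Bool) × F × F) ℝ :=
  ![(1 : Matrix (F ⊕ Bool) (F ⊕ Bool) ℝ) ⊗ₖ ((1 : Matrix F F ℝ) ⊗ₖ phi α),
    (1 : Matrix (F ⊕ Bool) (F ⊕ Bool) ℝ) ⊗ₖ (phi α ⊗ₖ Jmat F),
    P (Sum.inr true) ⊗ₖ (phi α ⊗ₖ Jmat F),
    Nmat P α - P (Sum.inr true) ⊗ₖ (phi α ⊗ₖ Jmat F)]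
set_option linter.unusedSectionVars false
section Helpers
variable {F : Type*} [Field F] [Fintype F] [DecidableEq F]

lemma kron_sum_left {ι l m n p : Type*} (s : Finset ι) (f : ι → Matrix l m ℝ)
    (B : Matrix n p ℝ) : (∑ i ∈ s, f i) ⊗ₖ B = ∑ i ∈ s, f i ⊗ₖ B := by
  ext ⟨a,b⟩ ⟨c,d⟩
  simp [Matrix.kroneckerMap_apply, Matrix.sum_apply, Finset.sum_mul]

lemma kron_sum_right {ι l m n p : Type*} (s : Finset ι) (A : Matrix l m ℝ)
    (f : ι → Matrix n p ℝ) : A ⊗ₖ (∑ i ∈ s, f i) = ∑ i ∈ s, A ⊗ₖ f i := by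
  ext ⟨a,b⟩ ⟨c,d⟩
  simp [Matrix.kroneckerMap_apply, Matrix.sum_apply, Finset.mul_sum]

lemma kron_sub_left {l m n p : Type*} (A B : Matrix l m ℝ) (C : Matrix n p ℝ) :
    (A - B) ⊗ₖ C = A ⊗ₖ C - B ⊗ₖ C := by
  ext ⟨a,b⟩ ⟨c,d⟩
  simp [Matrix.kroneckerMap_apply, sub_mul]

lemma kron_sub_right {l m n p : Type*} (A : Matrix l m ℝ) (B C : Matrix n p ℝ) :
    A ⊗ₖ (B - C) = A ⊗ₖ B - A ⊗ₖ C := by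
  ext ⟨a,b⟩ ⟨c,d⟩
  simp [Matrix.kroneckerMap_apply, mul_sub]

lemma JJ : (Jmat F) ⊗ₖ (Jmat F) = Jmat (F × F) := by
  ext ⟨a,b⟩ ⟨c,d⟩
  simp [Matrix.kroneckerMap_apply, Jmat]

end Helpers

set_option linter.unusedSectionVars false
section Helpers2
variable {F : Type*} [Field F] [Fintype F] [DecidableEq F]

lemma sum_ite_eu {p : F → Prop} [DecidablePred p] (h : ∃! x, p x) :
    ∑ x : F, (if p x then (1:ℝ) else 0) = 1 := by
  obtain ⟨a, ha, hu⟩ := h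
  have he : ∀ x, p x ↔ x = a := fun x => ⟨fun h => hu x h, fun h => h ▸ ha⟩
  simp [he]

lemma Cmul_same (h2 : (2:F) = 0) (a α β : F) :
    Cmat a α * Cmat a β = (Fintype.card F : ℝ) • Cmat a (α+β) := by
  ext ⟨b1,x⟩ ⟨b2,y⟩
  rw [Matrix.mul_apply, Fintype.sum_prod_type]
  simp only [Cmat, Matrix.of_apply, Matrix.smul_apply, smul_eq_mul]
  simp only [ite_mul, one_mul, zero_mul, Finset.sum_ite_eq', Finset.mem_univ, if_true]
  have hcond : ∀ γ : F, (y = x + a*(b1+γ) + α + a*(γ+b2) + β) ↔ (y = x + a*(b1+b2)+(α+β)) :=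
    fun γ => ⟨fun h => by linear_combination h + (a*γ)*h2,
              fun h => by linear_combination h - (a*γ)*h2⟩
  simp only [hcond, Finset.sum_const, Finset.card_univ, nsmul_eq_mul]

lemma Cmul_ne (h2 : (2:F) = 0) {a b : F} (hab : a ≠ b) (α β : F) :
    Cmat a α * Cmat b β = Jmat (F × F) := by
  have hc : a + b ≠ 0 := fun h0 => hab (by linear_combination h0 - b * h2)
  ext ⟨b1,x⟩ ⟨b2,y⟩
  rw [Matrix.mul_apply, Fintype.sum_prod_type]
  simp only [Cmat, Jmat, Matrix.of_apply]
  simp only [ite_mul, one_mul, zero_mul, Finset.sum_ite_eq', Finset.mem_univ, if_true]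
  apply sum_ite_eu
  refine ⟨(a+b)⁻¹ * (y - x - a*b1 - b*b2 - α - β), ?_, ?_⟩
  · field_simp
    ring
  · intro γ hγ
    field_simp
    linear_combination -hγ

lemma sumC_gamma (a : F) : ∑ γ : F, Cmat a γ = Jmat (F × F) := by
  ext ⟨b1,x⟩ ⟨b2,y⟩
  simp only [Matrix.sum_apply, Cmat, Jmat, Matrix.of_apply]
  apply sum_ite_eu
  exact ⟨y - (x + a*(b1+b2)), by ring, fun γ h => by linear_combination -h⟩

lemma sumPhi : ∑ γ : F, phi γ = Jmat F := by
  ext x y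
  simp only [Matrix.sum_apply, phi, Jmat, Matrix.of_apply]
  apply sum_ite_eu
  exact ⟨y - x, by ring, fun γ h => by linear_combination -h⟩

end Helpers2

section Helpers3
variable {F : Type*} [Field F] [Fintype F] [DecidableEq F]

lemma sumC_a (h2 : (2:F) = 0) (γ : F) :
    ∑ a : F, Cmat a γ =
      (Fintype.card F : ℝ) • ((1 : Matrix F F ℝ) ⊗ₖ phi γ)
        - (1 : Matrix F F ℝ) ⊗ₖ Jmat F + Jmat (F × F) := by
  ext ⟨b1,x⟩ ⟨b2,y⟩
  simp only [Matrix.sum_apply, Cmat, Jmat, phi, Matrix.of_apply, Matrix.sub_apply,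
    Matrix.add_apply, Matrix.smul_apply, Matrix.kroneckerMap_apply, Matrix.one_apply,
    smul_eq_mul]
  by_cases hb : b1 = b2
  · subst hb
    have hcond : ∀ a : F, (y = x + a*(b1+b1) + γ) ↔ (y = x + γ) :=
      fun a => ⟨fun h => by linear_combination h + (a*b1)*h2,
                fun h => by linear_combination h - (a*b1)*h2⟩
    simp only [hcond, Finset.sum_const, Finset.card_univ, nsmul_eq_mul, eq_self_iff_true, if_true, mul_one]
    ring
  · have hc : b1 + b2 ≠ 0 := fun h0 => hb (by linear_combination h0 - b2 * h2)
    rw [if_neg hb]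
    have : ∑ a : F, (if y = x + a*(b1+b2) + γ then (1:ℝ) else 0) = 1 := by
      apply sum_ite_eu
      refine ⟨(b1+b2)⁻¹ * (y - x - γ), ?_, ?_⟩
      · field_simp
        ring
      · intro a ha
        field_simp
        linear_combination -ha
    rw [this]; ring

end Helpers3

section Helpers4
variable {F : Type*} [Field F] [Fintype F] [DecidableEq F]

lemma A3_eq (P : F ⊕ Bool → Matrix (F ⊕ Bool) (F ⊕ Bool) ℝ) (α : F) :
    Amat P α 3 = ∑ a : F, P (Sum.inl a) ⊗ₖ Cmat a α := by
  show Nmat P α - P (Sum.inr true) ⊗ₖ (phi α ⊗ₖ Jmat F) = _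
  rw [Nmat, Fintype.sum_option]
  show P (Sum.inr true) ⊗ₖ (phi α ⊗ₖ Jmat F) + (∑ a : F, P (Sum.inl a) ⊗ₖ Cmat a α) - _ = _
  abel

lemma card_sum_bool : Fintype.card (F ⊕ Bool) = Fintype.card F + 2 := by
  simp

end Helpers4


set_option maxHeartbeats 1000000 in
/-- `A_{α,3}A_{β,3} = q²·A_{α+β,0} + Σ_γ (q·(−A_{γ,0}+A_{γ,1}+A_{γ,2}) + (q−2)·A_{γ,3})`. -/
theorem stmt13 {F : Type*} [Field F] [Fintype F] [DecidableEq F]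
    (m : ℕ) (hm : 1 ≤ m) (hF : Fintype.card F = 2 ^ m)
    (P : F ⊕ Bool → Matrix (F ⊕ Bool) (F ⊕ Bool) ℝ)
    (hPsymm : ∀ a, (P a)ᵀ = P a)
    (hP01 : ∀ a i j, P a i j = 0 ∨ P a i j = 1)
    (hPperm : ∀ a, P a * (P a)ᵀ = 1)
    (hPx : P (Sum.inr false) = 1)
    (hPsum : ∑ a : F ⊕ Bool, P a = Jmat (F ⊕ Bool)) (α β : F) :
    Amat P α 3 * Amat P β 3 =
      ((2 ^ m : ℝ)) ^ 2 • Amat P (α + β) 0 +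
        ∑ γ : F, ((2 ^ m : ℝ) • (-Amat P γ 0 + Amat P γ 1 + Amat P γ 2) +
          ((2 ^ m : ℝ) - 2) • Amat P γ 3) := by
  -- characteristic 2
  have hCh : CharP F (ringChar F) := ringChar.charP F
  have hchar : (2:F) = 0 := by
    obtain ⟨n, hp, hcard⟩ := FiniteField.card F (ringChar F)
    have hdvd : ringChar F ∣ 2 ^ m := by
      rw [← hF, hcard]; exact dvd_pow_self _ n.pos.ne'
    have h2' : ringChar F = 2 :=
      (Nat.prime_dvd_prime_iff_eq hp Nat.prime_two).mp (hp.dvd_of_dvd_pow hdvd)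
    have hc := CharP.cast_eq_zero F (ringChar F)
    rw [h2'] at hc
    exact_mod_cast hc
  have hq : (Fintype.card F : ℝ) = (2:ℝ)^m := by rw [hF]; push_cast; ring
  set q : ℝ := (2:ℝ)^m with hqdef
  set Py := P (Sum.inr true) with hPydef
  -- P basics
  have hPP : ∀ a, P a * P a = 1 := fun a => by
    nth_rewrite 2 [← hPsymm a]; exact hPperm a
  have hrow : ∀ a i, ∑ k, P a i k = 1 := by
    intro a i
    have h := congrArg (fun M => M i i) (hPperm a)
    simp only [Matrix.mul_apply, Matrix.transpose_apply, Matrix.one_apply_eq] at h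
    rw [← h]
    refine Finset.sum_congr rfl fun k _ => ?_
    rcases hP01 a i k with h0 | h1
    · rw [h0]; ring
    · rw [h1]; ring
  have hsymm' : ∀ a j k, P a k j = P a j k := by
    intro a j k
    conv_lhs => rw [← hPsymm a]
    rfl
  have hcol : ∀ a j, ∑ k, P a k j = 1 := by
    intro a j
    simp_rw [hsymm' a j]
    exact hrow a j
  -- J and P multiplication facts
  have hK2 : Jmat (F⊕Bool) * Jmat (F⊕Bool) = (q + 2) • Jmat (F⊕Bool) := by
    ext i j
    simp only [Matrix.mul_apply, Jmat, Matrix.of_apply, one_mul, Matrix.smul_apply,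
      smul_eq_mul, mul_one, Finset.sum_const, Finset.card_univ, nsmul_eq_mul]
    rw [card_sum_bool, hqdef]
    push_cast [hF]
    ring
  have hKP : Jmat (F⊕Bool) * Py = Jmat (F⊕Bool) := by
    ext i j
    simp only [Matrix.mul_apply, Jmat, Matrix.of_apply, one_mul]
    exact hcol _ j
  have hPK : Py * Jmat (F⊕Bool) = Jmat (F⊕Bool) := by
    ext i j
    simp only [Matrix.mul_apply, Jmat, Matrix.of_apply, mul_one]
    exact hrow _ i
  -- sum of P over F
  have hS : ∑ a : F, P (Sum.inl a) = Jmat (F⊕Bool) - 1 - Py := by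
    rw [← hPsum, Fintype.sum_sum_type, Fintype.sum_bool, hPx]
    abel
  -- square of S
  have hS2 : (Jmat (F⊕Bool) - 1 - Py) * (Jmat (F⊕Bool) - 1 - Py)
      = (q - 2) • Jmat (F⊕Bool) + (2:ℝ) • (1 : Matrix (F⊕Bool) (F⊕Bool) ℝ) + (2:ℝ) • Py := by
    have expand : (Jmat (F⊕Bool) - 1 - Py) * (Jmat (F⊕Bool) - 1 - Py)
        = Jmat (F⊕Bool) * Jmat (F⊕Bool) - Jmat (F⊕Bool) - Jmat (F⊕Bool) * Py
          - Jmat (F⊕Bool) + 1 + Py - Py * Jmat (F⊕Bool) + Py + Py * Py := by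
      noncomm_ring
    rw [expand, hK2, hKP, hPK, hPP]
    module
  -- the key product formula
  have key : Amat P α 3 * Amat P β 3 =
      ((Jmat (F⊕Bool) - 1 - Py) * (Jmat (F⊕Bool) - 1 - Py)) ⊗ₖ Jmat (F×F)
        + (1 : Matrix (F⊕Bool) (F⊕Bool) ℝ) ⊗ₖ
            (q • (∑ a : F, Cmat a (α+β)) - q • Jmat (F×F)) := by
    rw [A3_eq, A3_eq, Finset.sum_mul_sum]
    have step : ∀ a b : F,
        (P (Sum.inl a) ⊗ₖ Cmat a α) * (P (Sum.inl b) ⊗ₖ Cmat b β)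
          = (P (Sum.inl a) * P (Sum.inl b)) ⊗ₖ Jmat (F×F)
            + (if a = b then (1 : Matrix (F⊕Bool) (F⊕Bool) ℝ) ⊗ₖ
                ((Fintype.card F : ℝ) • Cmat a (α+β) - Jmat (F×F)) else 0) := by
      intro a b
      rw [← Matrix.mul_kronecker_mul]
      by_cases hab : a = b
      · subst hab
        rw [Cmul_same hchar, hPP, if_pos rfl]
        have habel : Jmat (F×F) + ((Fintype.card F : ℝ) • Cmat a (α+β) - Jmat (F×F))
            = (Fintype.card F : ℝ) • Cmat a (α+β) := by abel
        rw [← Matrix.kronecker_add, habel]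
      · rw [Cmul_ne hchar hab, if_neg hab, add_zero]
    calc
      ∑ a : F, ∑ b : F, (P (Sum.inl a) ⊗ₖ Cmat a α) * (P (Sum.inl b) ⊗ₖ Cmat b β)
          = ∑ a : F, ∑ b : F, ((P (Sum.inl a) * P (Sum.inl b)) ⊗ₖ Jmat (F×F)
              + (if a = b then (1 : Matrix (F⊕Bool) (F⊕Bool) ℝ) ⊗ₖ
                  ((Fintype.card F : ℝ) • Cmat a (α+β) - Jmat (F×F)) else 0)) := by
            exact Finset.sum_congr rfl fun a _ => Finset.sum_congr rfl fun b _ => step a b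
      _ = (∑ a : F, ∑ b : F, (P (Sum.inl a) * P (Sum.inl b)) ⊗ₖ Jmat (F×F))
            + ∑ a : F, (1 : Matrix (F⊕Bool) (F⊕Bool) ℝ) ⊗ₖ
                ((Fintype.card F : ℝ) • Cmat a (α+β) - Jmat (F×F)) := by
            rw [← Finset.sum_add_distrib]
            refine Finset.sum_congr rfl fun a _ => ?_
            rw [Finset.sum_add_distrib]
            congr 1
            rw [Finset.sum_ite_eq, if_pos (Finset.mem_univ a)]
      _ = ((∑ a : F, P (Sum.inl a)) * (∑ b : F, P (Sum.inl b))) ⊗ₖ Jmat (F×F)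
            + (1 : Matrix (F⊕Bool) (F⊕Bool) ℝ) ⊗ₖ
                (q • (∑ a : F, Cmat a (α+β)) - q • Jmat (F×F)) := by
            congr 1
            · rw [Finset.sum_mul_sum, kron_sum_left]
              exact Finset.sum_congr rfl fun a _ => (kron_sum_left _ _ _).symm
            · rw [← kron_sum_right]
              congr 1
              rw [Finset.sum_sub_distrib, ← Finset.smul_sum, Finset.sum_const,
                Finset.card_univ, hq]
              congr 1
              rw [← hq]
              simp only [Nat.cast_smul_eq_nsmul]
    rw [hS]
  -- sums of the A matrices over γ
  have hA0 : ∀ γ : F, Amat P γ 0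
      = (1 : Matrix (F⊕Bool) (F⊕Bool) ℝ) ⊗ₖ ((1 : Matrix F F ℝ) ⊗ₖ phi γ) := fun γ => rfl
  have hA1 : ∀ γ : F, Amat P γ 1
      = (1 : Matrix (F⊕Bool) (F⊕Bool) ℝ) ⊗ₖ (phi γ ⊗ₖ Jmat F) := fun γ => rfl
  have hA2 : ∀ γ : F, Amat P γ 2 = Py ⊗ₖ (phi γ ⊗ₖ Jmat F) := fun γ => rfl
  have hsumA0 : ∑ γ : F, Amat P γ 0
      = (1 : Matrix (F⊕Bool) (F⊕Bool) ℝ) ⊗ₖ ((1 : Matrix F F ℝ) ⊗ₖ Jmat F) := by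
    simp_rw [hA0]
    have h1 : (1 : Matrix (F⊕Bool) (F⊕Bool) ℝ) ⊗ₖ ((1 : Matrix F F ℝ) ⊗ₖ (∑ γ : F, phi γ))
        = ∑ γ : F, (1 : Matrix (F⊕Bool) (F⊕Bool) ℝ) ⊗ₖ ((1 : Matrix F F ℝ) ⊗ₖ phi γ) := by
      simp only [kron_sum_right]
    rw [← h1, sumPhi]
  have hsumA1 : ∑ γ : F, Amat P γ 1
      = (1 : Matrix (F⊕Bool) (F⊕Bool) ℝ) ⊗ₖ Jmat (F×F) := by
    simp_rw [hA1]
    have h1 : (1 : Matrix (F⊕Bool) (F⊕Bool) ℝ) ⊗ₖ ((∑ γ : F, phi γ) ⊗ₖ Jmat F)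
        = ∑ γ : F, (1 : Matrix (F⊕Bool) (F⊕Bool) ℝ) ⊗ₖ (phi γ ⊗ₖ Jmat F) := by
      rw [kron_sum_left, kron_sum_right]
    rw [← h1, sumPhi, JJ]
  have hsumA2 : ∑ γ : F, Amat P γ 2 = Py ⊗ₖ Jmat (F×F) := by
    simp_rw [hA2]
    have h1 : Py ⊗ₖ ((∑ γ : F, phi γ) ⊗ₖ Jmat F)
        = ∑ γ : F, Py ⊗ₖ (phi γ ⊗ₖ Jmat F) := by
      rw [kron_sum_left, kron_sum_right]
    rw [← h1, sumPhi, JJ]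
  have hsumA3 : ∑ γ : F, Amat P γ 3 = (Jmat (F⊕Bool) - 1 - Py) ⊗ₖ Jmat (F×F) := by
    simp_rw [A3_eq]
    rw [Finset.sum_comm, ← hS, kron_sum_left]
    refine Finset.sum_congr rfl fun a _ => ?_
    rw [← sumC_gamma a, kron_sum_right]
  -- assemble RHS
  rw [key, hS2]
  have hRHS : ∑ γ : F, ((2 ^ m : ℝ) • (-Amat P γ 0 + Amat P γ 1 + Amat P γ 2) +
        ((2 ^ m : ℝ) - 2) • Amat P γ 3)
      = q • (-(∑ γ : F, Amat P γ 0) + (∑ γ : F, Amat P γ 1) + (∑ γ : F, Amat P γ 2))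
        + (q - 2) • (∑ γ : F, Amat P γ 3) := by
    rw [Finset.sum_add_distrib, ← Finset.smul_sum, ← Finset.smul_sum]
    congr 2
    rw [Finset.sum_add_distrib, Finset.sum_add_distrib]
    congr 1
    rw [Finset.sum_neg_distrib]
  rw [hRHS, hsumA0, hsumA1, hsumA2, hsumA3, hA0 (α + β)]
  rw [sumC_a hchar, hq]
  -- distribute kronecker products and finish linearly
  simp only [kron_sub_left, kron_sub_right, Matrix.add_kronecker, Matrix.kronecker_add,
    Matrix.smul_kronecker, Matrix.kronecker_smul]
  module
end
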